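/- arXiv:1210.1597 — 2 statements merged into one kernel-verified Lean document; each statement's English description precedes it below -/
import Mathlib

section
/- Let F_q be a Hopf algebra over C[q,q⁻¹] which is torsion-free and satisfies [F_q, F_q] ⊆ (q−1)F_q (so that F_q/(q−1)F_q is commutative). Let I_q ⊆ F_q be a left ideal and two-sided coideal satisfying the strictness condition I_q ∩ (q−1)F_q = (q−1)I_q. Then [I_q, I_q] ⊆ (q−1)I_q. -/
/- STATEMENT 9: over `R = ℂ[q,q⁻¹]`, if `F_q` is a torsion-free Hopf `R`-algebra with
   `[F_q,F_q] ⊆ (q−1)F_q`, and `I_q` is a left ideal and two-sided coideal with the strictness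
   property `I_q ∩ (q−1)F_q = (q−1)I_q`, then `[I_q,I_q] ⊆ (q−1)I_q` (strict ⟹ proper). -/

open scoped TensorProduct

namespace GQDP

/-- The ground ring `ℂ[q,q⁻¹]` of complex Laurent polynomials. -/
abbrev R : Type := LaurentPolynomial ℂ

/-- The indeterminate `q`. -/
noncomputable def q : R := LaurentPolynomial.T 1

variable (H : Type*) [Ring H] [HopfAlgebra R H] [NoZeroSMulDivisors R H]

/-- The "tensor product" of two `R`-submodules of `H` inside `H ⊗[R] H`. -/
noncomputable def tsub (A B : Submodule R H) : Submodule R (H ⊗[R] H) :=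
  Submodule.span R {z | ∃ a ∈ A, ∃ b ∈ B, z = a ⊗ₜ[R] b}

/-- Strict quantizations of type `I` are proper. -/
theorem strict_implies_proper
    (hcomm : ∀ x y : H, ∃ z : H, x * y - y * x = (q - 1) • z)
    (I : Submodule R H)
    (hIdeal : ∀ h : H, ∀ x ∈ I, h * x ∈ I)
    (hcoideal : ∀ x ∈ I, Coalgebra.comul (R := R) x ∈ tsub H ⊤ I ⊔ tsub H I ⊤)
    (hcounit : ∀ x ∈ I, Coalgebra.counit (R := R) x = 0)
    (hstrict : ∀ x : H, (x ∈ I ∧ ∃ y : H, x = (q - 1) • y) ↔ (∃ z ∈ I, x = (q - 1) • z)) :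
    ∀ x ∈ I, ∀ y ∈ I, ∃ z ∈ I, x * y - y * x = (q - 1) • z := by
  intro x hx y hy
  have hmem : x * y - y * x ∈ I := by
    exact I.sub_mem (hIdeal x y hy) (hIdeal y x hx)
  exact ((hstrict (x * y - y * x)).mp ⟨hmem, hcomm x y⟩)

end GQDP
end

section
/- With H, H', C_q, C_q^Lsh as above: if the strictness condition C_q ∩ (q−1)H = (q−1)C_q holds, then C_q^Lsh ∩ (q−1)H' = (q−1)·C_q^Lsh. -/
/- STATEMENT 12: if the left coideal subalgebra C_q ⊆ H is strict, i.e.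
   C_q ∩ (q−1)H = (q−1)C_q, then its Drinfeld-type transform is strict as well:
   C_q^Lsh ∩ (q−1)H' = (q−1)·C_q^Lsh. -/

open scoped TensorProduct
open PiTensorProduct

namespace GQDP

variable (H : Type*) [Ring H] [HopfAlgebra R H] [NoZeroSMulDivisors R H]

/-- The `n`-fold tensor power `H^{⊗n}`. -/
abbrev TP (n : ℕ) := ⨂[R] (_ : Fin n), H

/-- The "tensor product" of a family of submodules `p i ⊆ H` inside `H^{⊗n}`: the additive
    subgroup generated by the pure tensors with `i`-th entry in `p i` (for `n ≥ 1` this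
    coincides with the `R`-span of such pure tensors). -/
noncomputable def tgrp {n : ℕ} (p : Fin n → Submodule R H) : AddSubgroup (TP H n) :=
  AddSubgroup.closure {z | ∃ f : Fin n → H, (∀ i, f i ∈ p i) ∧ z = PiTensorProduct.tprod R f}

/-- The canonical map `H ⊗ H^{⊗n} → H^{⊗(n+1)}`. -/
noncomputable def step (n : ℕ) : (H ⊗[R] TP H n) →ₗ[R] TP H (n + 1) :=
  ((PiTensorProduct.reindex R (fun _ : Fin 1 ⊕ Fin n => H)
      (finSumFinEquiv.trans (finCongr (Nat.add_comm 1 n)))).toLinearMap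
    ∘ₗ (PiTensorProduct.tmulEquiv (ι := Fin 1) (ι₂ := Fin n) R H).toLinearMap)
    ∘ₗ (LinearMap.rTensor (TP H n)
      (PiTensorProduct.subsingletonEquiv (0 : Fin 1) : (⨂[R] (_ : Fin 1), H) ≃ₗ[R] H).symm.toLinearMap)

/-- The iterated coproduct `Δⁿ : H → H^{⊗n}`, with `Δ⁰ := ε` and `Δ^{n+1} := (id ⊗ Δⁿ) ∘ Δ`. -/
noncomputable def DeltaIter : (n : ℕ) → H →ₗ[R] TP H n
  | 0 => (PiTensorProduct.isEmptyEquiv (ι := Fin 0)).symm.toLinearMap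
          ∘ₗ (Coalgebra.counit : H →ₗ[R] R)
  | n + 1 => step H n ∘ₗ LinearMap.lTensor H (DeltaIter n)
              ∘ₗ (Coalgebra.comul : H →ₗ[R] H ⊗[R] H)

/-- `δ_n := (id − η∘ε)^{⊗n} ∘ Δⁿ : H → H^{⊗n}`. -/
noncomputable def deltaN (n : ℕ) : H →ₗ[R] TP H n :=
  (PiTensorProduct.map fun _ =>
      (LinearMap.id : H →ₗ[R] H) - Algebra.linearMap R H ∘ₗ (Coalgebra.counit : H →ₗ[R] R))
    ∘ₗ DeltaIter H n

/-- Drinfeld's subalgebra `H' = { a ∈ H | δ_n(a) ∈ (q−1)ⁿ H^{⊗n} for all n }`. -/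
noncomputable def Hprime : Set H :=
  {a | ∀ n : ℕ, ∃ y : TP H n, deltaN H n a = ((q - 1) ^ n) • y}

/-- The Drinfeld-type transform `C^Lsh := { x ∈ C | δ_n(x) ∈ (q−1)ⁿ H^{⊗(n−1)} ⊗ C, ∀ n ≥ 1 }`. -/
noncomputable def Lsh (C : Submodule R H) : Set H :=
  {x | x ∈ C ∧ ∀ n : ℕ,
    ∃ y ∈ tgrp H (fun i : Fin (n + 1) => if i = Fin.last n then C else ⊤),
      deltaN H (n + 1) x = ((q - 1) ^ (n + 1)) • y}

/-! Since `H` is torsion-free, strictness of `C` says that `q - 1` acts injectively on `H ⧸ C`.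
Over the Dedekind domain `ℂ[q,q⁻¹]` the torsion-free modules `H^{⊗n}` are flat, so `q - 1` stays
injective on `H^{⊗n} ⊗ (H ⧸ C) = H^{⊗(n+1)} ⧸ (H^{⊗n} ⊗ C)`. Hence if `(q - 1) y ∈ C^Lsh` with
`y ∈ H'`, then `δ_{n+1}(y) = (q - 1)^{n+1} v` with `(q - 1) v ∈ H^{⊗n} ⊗ C`, so `v ∈ H^{⊗n} ⊗ C`. -/

instance : IsDedekindDomain R :=
  IsLocalization.isDedekindDomain (Polynomial ℂ)
    (powers_le_nonZeroDivisors_of_noZeroDivisors Polynomial.X_ne_zero) R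

lemma q_sub_one_ne_zero : q - 1 ≠ 0 := by
  intro h
  simpa [q, ← LaurentPolynomial.T_zero] using congrArg (fun f : R => f.coeff 1) h

section TensorPower

variable (A M : Type*) [CommRing A] [AddCommGroup M] [Module A M]

noncomputable def splitLast (n : ℕ) :
    (⨂[A] (_ : Fin (n + 1)), M) ≃ₗ[A] (⨂[A] (_ : Fin n), M) ⊗[A] M :=
  (TensorPower.mulEquiv (R := A) (M := M) (n := n) (m := 1)).symm.trans
    (TensorProduct.congr (LinearEquiv.refl A _) (subsingletonEquiv 0))

variable {A M}

lemma splitLast_symm_tprod_tmul {n : ℕ} (g : Fin n → M) (c : M) :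
    (splitLast A M n).symm (PiTensorProduct.tprod A g ⊗ₜ c) =
      PiTensorProduct.tprod A (Fin.snoc g c) := by
  rw [splitLast, LinearEquiv.symm_trans_apply, LinearEquiv.symm_symm,
    TensorProduct.congr_symm_tmul, LinearEquiv.refl_symm, LinearEquiv.refl_apply,
    subsingletonEquiv_symm_apply', ← TensorPower.gMul_def, TensorPower.tprod_mul_tprod,
    Fin.append_right_eq_snoc]

lemma splitLast_tprod {n : ℕ} (f : Fin (n + 1) → M) :
    splitLast A M n (PiTensorProduct.tprod A f) =
      PiTensorProduct.tprod A (Fin.init f) ⊗ₜ f (Fin.last n) := by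
  rw [← LinearEquiv.eq_symm_apply, splitLast_symm_tprod_tmul, Fin.snoc_init_self]

theorem flat_piTensorProduct_fin [Module.Flat A M] (n : ℕ) :
    Module.Flat A (⨂[A] (_ : Fin n), M) := by
  induction n with
  | zero => exact .of_linearEquiv (isEmptyEquiv (Fin 0))
  | succ n ih => exact .of_linearEquiv (splitLast A M n)

lemma mem_closure_tprod_iff_splitLast_mem {n : ℕ} (C : Submodule A M)
    (w : ⨂[A] (_ : Fin (n + 1)), M) :
    w ∈ AddSubgroup.closure {z | ∃ f : Fin (n + 1) → M,
      (∀ i, f i ∈ (if i = Fin.last n then C else ⊤)) ∧ z = PiTensorProduct.tprod A f} ↔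
      splitLast A M n w ∈ LinearMap.range (LinearMap.lTensor _ C.subtype) := by
  constructor
  · intro hw
    refine (AddSubgroup.closure_le ((LinearMap.range (LinearMap.lTensor _ C.subtype)).comap
      (splitLast A M n).toLinearMap).toAddSubgroup).2 ?_ hw
    rintro _ ⟨f, hf, rfl⟩
    have hlast : f (Fin.last n) ∈ C := by simpa using hf (Fin.last n)
    exact ⟨PiTensorProduct.tprod A (Fin.init f) ⊗ₜ ⟨_, hlast⟩, by simp [splitLast_tprod]⟩
  · rintro ⟨u, hu⟩
    rw [← (splitLast A M n).symm_apply_apply w, ← hu]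
    clear hu
    induction u using TensorProduct.induction_on with
    | zero => simp
    | add u v hu hv => simpa using AddSubgroup.add_mem _ hu hv
    | tmul m c =>
      induction m using PiTensorProduct.induction_on with
      | smul_tprod r g =>
        refine AddSubgroup.subset_closure ⟨Fin.snoc g (r • (c : M)), fun i => ?_, ?_⟩
        · induction i using Fin.lastCases with
          | last => simpa using C.smul_mem r c.2
          | cast i => simp [(Fin.castSucc_lt_last i).ne]
        · rw [TensorProduct.smul_tmul, LinearMap.lTensor_tmul, Submodule.subtype_apply,
            SetLike.val_smul, splitLast_symm_tprod_tmul]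
      | add m m' hm hm' => simpa [TensorProduct.add_tmul] using AddSubgroup.add_mem _ hm hm'

end TensorPower

section Saturation

variable {A M N : Type*} [CommRing A] [AddCommGroup M] [Module A M] [AddCommGroup N] [Module A N]

instance isTorsionFree_of_noZeroSMulDivisors [Nontrivial A] [NoZeroSMulDivisors A M] :
    Module.IsTorsionFree A M :=
  .of_smul_eq_zero fun _ _ => NoZeroSMulDivisors.eq_zero_or_eq_zero_of_smul_eq_zero

lemma isSMulRegular_quotient {C : Submodule A N} {r : A} (hN : IsSMulRegular N r)
    (hC : ∀ y : N, r • y ∈ C → ∃ z ∈ C, r • y = r • z) : IsSMulRegular (N ⧸ C) r := by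
  rintro ⟨a⟩ ⟨b⟩ hab
  obtain ⟨z, hz, hrz⟩ := hC (a - b) (by simpa [smul_sub] using (Submodule.Quotient.eq C).1 hab)
  exact (Submodule.Quotient.eq C).2 (hN hrz ▸ hz)

lemma mem_range_lTensor_subtype_of_smul_mem [Module.Flat A M] {C : Submodule A N} {r : A}
    (hr : IsSMulRegular (N ⧸ C) r) {v : M ⊗[A] N}
    (hv : r • v ∈ LinearMap.range (LinearMap.lTensor M C.subtype)) :
    v ∈ LinearMap.range (LinearMap.lTensor M C.subtype) := by
  rw [← lTensor_mkQ, LinearMap.mem_ker] at hv ⊢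
  exact hr.lTensor M (by simpa using hv)

end Saturation

lemma smul_mem_Lsh {H : Type*} [Ring H] [HopfAlgebra R H] {C : Submodule R H} (r : R) {z : H}
    (hz : z ∈ Lsh H C) : r • z ∈ Lsh H C := by
  refine ⟨C.smul_mem r hz.1, fun n => ?_⟩
  obtain ⟨w, hw, hzw⟩ := hz.2 n
  refine ⟨r • w, (mem_closure_tprod_iff_splitLast_mem C _).2 ?_, by rw [map_smul, hzw, smul_comm]⟩
  rw [map_smul]
  exact Submodule.smul_mem _ r ((mem_closure_tprod_iff_splitLast_mem C w).1 hw)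

lemma Lsh_subset_Hprime {H : Type*} [Ring H] [HopfAlgebra R H] (C : Submodule R H) :
    Lsh H C ⊆ Hprime H := by
  rintro z ⟨-, hz⟩ (_ | n)
  · exact ⟨_, (one_smul _ _).symm⟩
  · obtain ⟨w, -, hzw⟩ := hz n
    exact ⟨w, hzw⟩

lemma mem_Lsh_of_smul_mem {C : Submodule R H} (hC : IsSMulRegular (H ⧸ C) (q - 1)) {y : H}
    (hy : y ∈ Hprime H) (hyC : y ∈ C) (h : (q - 1) • y ∈ Lsh H C) : y ∈ Lsh H C := by
  refine ⟨hyC, fun n => ?_⟩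
  have := flat_piTensorProduct_fin (A := R) (M := H) n
  have := flat_piTensorProduct_fin (A := R) (M := H) (n + 1)
  obtain ⟨w, hw, hw'⟩ := h.2 n
  obtain ⟨v, hv⟩ := hy (n + 1)
  have hwv : w = (q - 1) • v :=
    smul_right_injective _ (pow_ne_zero (n + 1) q_sub_one_ne_zero) <| by
      dsimp only
      rw [← hw', map_smul, hv, smul_comm]
  replace hw := (mem_closure_tprod_iff_splitLast_mem C w).1 hw
  rw [hwv, map_smul] at hw
  exact ⟨v, (mem_closure_tprod_iff_splitLast_mem C v).2
    (mem_range_lTensor_subtype_of_smul_mem hC hw), hv⟩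

theorem Lsh_strict_of_strict (C : Subalgebra R H)
    (hstrict : ∀ x : H,
      (x ∈ C ∧ ∃ y : H, x = (q - 1) • y) ↔ (∃ z ∈ C, x = (q - 1) • z)) :
    ∀ x : H,
      (x ∈ Lsh H C.toSubmodule ∧ ∃ y ∈ Hprime H, x = (q - 1) • y) ↔
      (∃ z ∈ Lsh H C.toSubmodule, x = (q - 1) • z) := by
  have hq : IsSMulRegular H (q - 1) := .of_ne_zero q_sub_one_ne_zero
  have hC : IsSMulRegular (H ⧸ C.toSubmodule) (q - 1) :=
    isSMulRegular_quotient hq fun y hy => (hstrict _).1 ⟨hy, y, rfl⟩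
  intro x
  constructor
  · rintro ⟨hx, y, hy, rfl⟩
    obtain ⟨z, hz, hyz⟩ := (hstrict _).1 ⟨hx.1, y, rfl⟩
    exact ⟨y, mem_Lsh_of_smul_mem H hC hy (hq hyz ▸ hz) hx, rfl⟩
  · rintro ⟨z, hz, rfl⟩
    exact ⟨smul_mem_Lsh _ hz, z, Lsh_subset_Hprime _ hz, rfl⟩

end GQDP
end
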